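/- arXiv:1803.06752 — 5 statements merged into one kernel-verified Lean document; each statement's English description precedes it below -/
import Mathlib

section
/- (Bekić principle) Let D and E be complete lattices and let F : D × E → D and G : D × E → E be monotone functions. Then the least fixpoint of the monotone map ⟨F,G⟩ : D × E → D × E equals the pair (f̂, ĝ) where f̂ = μf. F(f, μg. G(f, g)) and ĝ = μg. G(μf. F(f, g), g); here μx. H(x) denotes the least fixpoint of the monotone function x ↦ H(x). -/
/-!
Write `(a, b)` for the least fixpoint of `⟨F, G⟩` and `g* f = μg. G(f, g)`.
Since `G(a, b) = b` we get `g* a ≤ b`, hence `F(a, g* a) ≤ a` and `μf. F(f, g* f) ≤ a`;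
conversely `(μf. F(f, g* f), g* (μf. F(f, g* f)))` is a fixpoint of `⟨F, G⟩`, so it lies above `p`.
This identifies the first component; the second follows by exchanging the roles of `D` and `E`.
-/

/-- The least fixpoint (by Knaster–Tarski, `sInf {x | f x ≤ x}`) of a monotone map. -/
def lfpOf {L : Type*} [CompleteLattice L] (f : L → L) : L := sInf {x | f x ≤ x}

section LfpOf

variable {L M : Type*} [CompleteLattice L] [CompleteLattice M]

theorem lfpOf_le {f : L → L} {x : L} (hx : f x ≤ x) : lfpOf f ≤ x := sInf_le hx

theorem lfpOf_mono {f g : L → L} (h : f ≤ g) : lfpOf f ≤ lfpOf g :=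
  sInf_le_sInf fun _ hx => (h _).trans hx

theorem map_lfpOf {f : L → L} (hf : Monotone f) : f (lfpOf f) = lfpOf f := by
  have h : f (lfpOf f) ≤ lfpOf f := le_sInf fun _ hx => (hf (lfpOf_le hx)).trans hx
  exact le_antisymm h (lfpOf_le (hf h))

theorem OrderIso.lfpOf_conj (e : L ≃o M) (f : L → L) :
    lfpOf (e ∘ f ∘ e.symm) = e (lfpOf f) := by
  rw [lfpOf, lfpOf, e.map_sInf, ← sInf_image, e.image_eq_preimage_symm]
  congr 1
  ext y
  exact e.le_symm_apply.symm

end LfpOf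

section Bekic

variable {D E : Type*} [CompleteLattice D] [CompleteLattice E] {F : D × E → D} {G : D × E → E}

theorem fst_lfpOf_prod (hF : Monotone F) (hG : Monotone G) :
    (lfpOf fun p => (F p, G p)).1 = lfpOf fun f => F (f, lfpOf fun g => G (f, g)) := by
  set p := lfpOf fun p => (F p, G p)
  set gStar : D → E := fun f => lfpOf fun g => G (f, g)
  set fHat := lfpOf fun f => F (f, gStar f)
  have hp : (F p, G p) = p := map_lfpOf fun _ _ h => Prod.mk_le_mk.mpr ⟨hF h, hG h⟩
  have gStar_mono : Monotone gStar := fun _ _ h => lfpOf_mono fun _ => hG ⟨h, le_rfl⟩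
  have hfHat : F (fHat, gStar fHat) = fHat :=
    map_lfpOf (f := fun f => F (f, gStar f)) fun _ _ h => hF ⟨h, gStar_mono h⟩
  have hgStar : G (fHat, gStar fHat) = gStar fHat :=
    map_lfpOf (f := fun g => G (fHat, g)) fun _ _ h => hG ⟨le_rfl, h⟩
  have gStar_le : gStar p.1 ≤ p.2 := lfpOf_le (congrArg Prod.snd hp).le
  have p_le : p ≤ (fHat, gStar fHat) :=
    lfpOf_le (f := fun p => (F p, G p)) (Prod.mk_le_mk.mpr ⟨hfHat.le, hgStar.le⟩)
  have fHat_le : fHat ≤ p.1 := lfpOf_le <| calc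
    F (p.1, gStar p.1) ≤ F p := hF (Prod.mk_le_mk.mpr ⟨le_rfl, gStar_le⟩)
    _ = p.1 := congrArg Prod.fst hp
  exact le_antisymm p_le.1 fHat_le

theorem snd_lfpOf_prod (hF : Monotone F) (hG : Monotone G) :
    (lfpOf fun p => (F p, G p)).2 = lfpOf fun g => G (lfpOf fun f => F (f, g), g) := by
  have hswap := (OrderIso.prodComm : D × E ≃o E × D).lfpOf_conj fun p => (F p, G p)
  rw [OrderIso.prodComm_symm, OrderIso.coe_prodComm, OrderIso.coe_prodComm] at hswap
  have swap_mono : Monotone (Prod.swap : E × D → D × E) := fun _ _ => Prod.swap_le_swap.mpr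
  rw [← Prod.fst_swap, ← hswap]
  exact fst_lfpOf_prod (hG.comp swap_mono) (hF.comp swap_mono)

end Bekic

/-- (Bekić principle) For complete lattices `D`, `E` and monotone `F : D × E → D`,
`G : D × E → E`, the least fixpoint of `⟨F, G⟩ : D × E → D × E` is the pair
`(f̂, ĝ)` with `f̂ = μf. F(f, μg. G(f,g))` and `ĝ = μg. G(μf. F(f,g), g)`. -/
theorem bekic {D E : Type*} [CompleteLattice D] [CompleteLattice E]
    (F : D × E → D) (G : D × E → E) (hF : Monotone F) (hG : Monotone G) :
    lfpOf (fun p : D × E => (F p, G p)) =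
      (lfpOf (fun f : D => F (f, lfpOf (fun g : E => G (f, g)))),
       lfpOf (fun g : E => G (lfpOf (fun f : D => F (f, g)), g))) :=
  Prod.ext (fst_lfpOf_prod hF hG) (snd_lfpOf_prod hF hG)
end

section
/- A subset A ⊆ ℚ is fixed setwise by every order-automorphism of ℚ fixing a finite set S pointwise if and only if A is a union of S-orbits, i.e., a union of some of the singletons {s} (s ∈ S) and some of the connected components of ℚ \ S. Consequently, every finitely supported subset of ℚ (over ordered atoms) is a finite union of open intervals and single points. -/
/-- The `S`-orbit of a rational `a` under the group of order-automorphisms of `ℚ`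
fixing the finite set `S` pointwise. -/
def qOrbit (S : Finset ℚ) (a : ℚ) : Set ℚ :=
  {b | ∃ π : ℚ ≃o ℚ, (∀ s ∈ S, π s = s) ∧ π a = b}

/-!
The `S`-orbits are the points of `S` and the components of `ℚ \ S`: two points of a component
are exchanged by a piecewise-linear automorphism that is the identity outside that component.
A set supported by a finite `T` is a union of `T`-orbits, hence of finitely many open
intervals and points.
-/

open Set

namespace OrderIso

section Piecewise

variable {α β : Type*} [LinearOrder α] [LinearOrder β]

noncomputable def piecewise (f g : α ≃o β) (c : α) (h : f c = g c) : α ≃o β :=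
  StrictMono.orderIsoOfSurjective (fun x => if x ≤ c then f x else g x)
    (by
      intro x y hxy
      by_cases hy : y ≤ c
      · simp only [hxy.le.trans hy, hy, if_true, f.lt_iff_lt, hxy]
      · by_cases hx : x ≤ c
        · simp only [hx, hy, if_true, if_false]
          exact (f.monotone hx).trans_lt (h ▸ g.strictMono (not_le.1 hy))
        · simp only [hx, hy, if_false, g.lt_iff_lt, hxy])
    (by
      intro y
      by_cases hy : y ≤ f c
      · exact ⟨f.symm y, by simp [f.symm_apply_le.2 hy]⟩
      · have hc : ¬ g.symm y ≤ c := fun hc => hy (h ▸ g.symm_apply_le.1 hc)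
        exact ⟨g.symm y, by simp [hc]⟩)

variable {f g : α ≃o β} {c x : α} {h : f c = g c}

theorem piecewise_apply_of_le (hx : x ≤ c) : piecewise f g c h x = f x :=
  if_pos hx

theorem piecewise_apply_of_ge (hx : c ≤ x) : piecewise f g c h x = g x := by
  rcases hx.eq_or_lt with rfl | hx
  · exact (piecewise_apply_of_le le_rfl).trans h
  · exact if_neg (not_le.2 hx)

end Piecewise

section Homothety

variable {K : Type*} [Field K] [LinearOrder K] [IsStrictOrderedRing K]

def homothety (p : K) {s : K} (hs : 0 < s) : K ≃o K :=
  (subRight p).trans ((mulLeft₀ s hs).trans (addLeft p))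

theorem homothety_apply (p : K) {s : K} (hs : 0 < s) (x : K) :
    homothety p hs x = p + s * (x - p) :=
  rfl

end Homothety

end OrderIso

namespace Finset

variable {α : Type*} [LinearOrder α]

theorem exists_lt_forall_le_of_lt [NoMinOrder α] (T : Finset α) (c : α) :
    ∃ l < c, ∀ s ∈ T, s < c → s ≤ l := by
  obtain ⟨l₀, hl₀⟩ := exists_lt c
  set L := insert l₀ (T.filter (· < c))
  refine ⟨L.max' (insert_nonempty _ _), (L.max'_lt_iff _).2 ?_,
    fun s hs hsc => L.le_max' s (mem_insert_of_mem (mem_filter.2 ⟨hs, hsc⟩))⟩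
  simpa [L] using hl₀

theorem exists_gt_forall_ge_of_gt [NoMaxOrder α] (T : Finset α) (c : α) :
    ∃ r > c, ∀ s ∈ T, c < s → r ≤ s := by
  obtain ⟨r₀, hr₀⟩ := exists_gt c
  set R := insert r₀ (T.filter (c < ·))
  refine ⟨R.min' (insert_nonempty _ _), (R.lt_min'_iff _).2 ?_,
    fun s hs hcs => R.min'_le s (mem_insert_of_mem (mem_filter.2 ⟨hs, hcs⟩))⟩
  simpa [R] using hr₀

end Finset

section Transitivity

variable {K : Type*} [Field K] [LinearOrder K] [IsStrictOrderedRing K]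

theorem exists_orderIso_fixing_of_mem_Ioo {l r a b : K} (ha : a ∈ Ioo l r) (hb : b ∈ Ioo l r) :
    ∃ π : K ≃o K, (∀ x, x ≤ l ∨ r ≤ x → π x = x) ∧ π a = b := by
  -- `π` is the identity outside `(l, r)` and affine on `[l, a]` and on `[a, r]`
  have hl : 0 < (b - l) / (a - l) := div_pos (sub_pos.2 hb.1) (sub_pos.2 ha.1)
  have hr : 0 < (r - b) / (r - a) := div_pos (sub_pos.2 hb.2) (sub_pos.2 ha.2)
  set f := OrderIso.homothety l hl
  set g := OrderIso.homothety r hr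
  have hfl : f l = l := by simp [f, OrderIso.homothety_apply]
  have hfa : f a = b := by
    simp only [f, OrderIso.homothety_apply, div_mul_cancel₀ _ (sub_pos.2 ha.1).ne']; ring
  have hga : g a = b := by
    simp only [g, OrderIso.homothety_apply, ← neg_sub r a, mul_neg,
      div_mul_cancel₀ _ (sub_pos.2 ha.2).ne']; ring
  have hgr : g r = r := by simp [g, OrderIso.homothety_apply]
  set φ := OrderIso.piecewise (OrderIso.refl K) f l hfl.symm
  have hφa : φ a = b := (OrderIso.piecewise_apply_of_ge ha.1.le).trans hfa
  have hφ : ∀ x ≤ l, φ x = x := fun x hx => OrderIso.piecewise_apply_of_le hx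
  set ψ := OrderIso.piecewise φ g a (hφa.trans hga.symm)
  have hψr : ψ r = OrderIso.refl K r := (OrderIso.piecewise_apply_of_ge ha.2.le).trans hgr
  refine ⟨OrderIso.piecewise ψ (OrderIso.refl K) r hψr, ?_, ?_⟩
  · rintro x (hx | hx)
    · refine (OrderIso.piecewise_apply_of_le (hx.trans (ha.1.trans ha.2).le)).trans ?_
      exact (OrderIso.piecewise_apply_of_le (hx.trans ha.1.le)).trans (hφ x hx)
    · exact OrderIso.piecewise_apply_of_ge hx
  · refine (OrderIso.piecewise_apply_of_le ha.2.le).trans ?_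
    exact (OrderIso.piecewise_apply_of_le le_rfl).trans hφa

theorem exists_orderIso_fixing_of_forall_notMem_uIcc (T : Finset K) {a b : K}
    (h : ∀ s ∈ T, s ∉ uIcc a b) :
    ∃ π : K ≃o K, (∀ s ∈ T, π s = s) ∧ π a = b := by
  obtain ⟨l, hl, hTl⟩ := T.exists_lt_forall_le_of_lt (min a b)
  obtain ⟨r, hr, hTr⟩ := T.exists_gt_forall_ge_of_gt (max a b)
  obtain ⟨π, hπ, hπa⟩ := exists_orderIso_fixing_of_mem_Ioo (l := l) (r := r)
    ⟨hl.trans_le (min_le_left a b), (le_max_left a b).trans_lt hr⟩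
    ⟨hl.trans_le (min_le_right a b), (le_max_right a b).trans_lt hr⟩
  refine ⟨π, fun s hs => hπ s ?_, hπa⟩
  have hs' : s < min a b ∨ max a b < s := by
    by_contra! hs'
    exact h s hs hs'
  exact hs'.imp (hTl s hs) (hTr s hs)

end Transitivity

section IntervalsAndPoints

open Finset

variable {α : Type*} [LinearOrder α]

open scoped Classical in
noncomputable def raysIoi (T : Finset α) : Finset (Set α) :=
  insert univ (T.image Ioi)

open scoped Classical in
noncomputable def raysIio (T : Finset α) : Finset (Set α) :=
  insert univ (T.image Iio)

open scoped Classical in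
noncomputable def intervalsAndPoints (T : Finset α) : Finset (Set α) :=
  image₂ (· ∩ ·) (raysIoi T) (raysIio T) ∪ T.image singleton

theorem exists_mem_raysIoi (T : Finset α) (a : α) :
    ∃ I ∈ raysIoi T, a ∈ I ∧ ∀ s ∈ T, s < a → ∀ x ∈ I, s < x := by
  set L := T.filter (· < a)
  by_cases hL : L.Nonempty
  · obtain ⟨hmT, hma⟩ := mem_filter.1 (L.max'_mem hL)
    refine ⟨Ioi (L.max' hL), mem_insert_of_mem (mem_image_of_mem _ hmT), hma,
      fun s hs hsa x hx => (L.le_max' s (mem_filter.2 ⟨hs, hsa⟩)).trans_lt hx⟩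
  · exact ⟨univ, mem_insert_self _ _, trivial,
      fun s hs hsa => absurd ⟨s, mem_filter.2 ⟨hs, hsa⟩⟩ hL⟩

theorem exists_mem_raysIio (T : Finset α) (a : α) :
    ∃ J ∈ raysIio T, a ∈ J ∧ ∀ s ∈ T, a < s → ∀ x ∈ J, x < s := by
  set R := T.filter (a < ·)
  by_cases hR : R.Nonempty
  · obtain ⟨hmT, ham⟩ := mem_filter.1 (R.min'_mem hR)
    refine ⟨Iio (R.min' hR), mem_insert_of_mem (mem_image_of_mem _ hmT), ham,
      fun s hs has x hx => hx.trans_le (R.min'_le s (mem_filter.2 ⟨hs, has⟩))⟩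
  · exact ⟨univ, mem_insert_self _ _, trivial,
      fun s hs has => absurd ⟨s, mem_filter.2 ⟨hs, has⟩⟩ hR⟩

theorem exists_mem_intervalsAndPoints_of_notMem {T : Finset α} {a : α} (haT : a ∉ T) :
    ∃ B ∈ intervalsAndPoints T, a ∈ B ∧ ∀ x ∈ B, ∀ s ∈ T, s ∉ uIcc a x := by
  obtain ⟨I, hI, haI, hIT⟩ := exists_mem_raysIoi T a
  obtain ⟨J, hJ, haJ, hJT⟩ := exists_mem_raysIio T a
  refine ⟨I ∩ J, Finset.mem_union_left _ (mem_image₂_of_mem hI hJ), ⟨haI, haJ⟩,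
    fun x hx s hs => ?_⟩
  rcases lt_trichotomy s a with hsa | rfl | has
  · exact notMem_uIcc_of_lt hsa (hIT s hs hsa x hx.1)
  · exact absurd hs haT
  · exact notMem_uIcc_of_gt has (hJT s hs has x hx.2)

def IsIntervalOrPoint (B : Set α) : Prop :=
  (∃ a b : α, B = Ioo a b) ∨ (∃ a : α, B = Ioi a) ∨ (∃ a : α, B = Iio a) ∨ B = univ ∨
    ∃ a : α, B = {a}

theorem isIntervalOrPoint_of_mem_intervalsAndPoints {T : Finset α} {B : Set α}
    (hB : B ∈ intervalsAndPoints T) :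
    IsIntervalOrPoint B := by
  simp only [intervalsAndPoints, raysIoi, raysIio, Finset.mem_union, mem_image₂,
    Finset.mem_insert, Finset.mem_image] at hB
  rcases hB with ⟨I, hI, J, hJ, rfl⟩ | ⟨s, -, rfl⟩
  · rcases hI with rfl | ⟨s, -, rfl⟩ <;> rcases hJ with rfl | ⟨t, -, rfl⟩ <;>
      simp [IsIntervalOrPoint, Ioi_inter_Iio]
  · simp [IsIntervalOrPoint]

end IntervalsAndPoints

theorem forall_image_eq_iff_forall_qOrbit_subset (S : Finset ℚ) (A : Set ℚ) :
    (∀ π : ℚ ≃o ℚ, (∀ s ∈ S, π s = s) → ⇑π '' A = A) ↔ ∀ a ∈ A, qOrbit S a ⊆ A := by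
  constructor
  · rintro h a ha _ ⟨π, hπ, rfl⟩
    exact h π hπ ▸ mem_image_of_mem π ha
  · intro h π hπ
    refine (image_subset_iff.2 fun a ha => (h a ha ⟨π, hπ, rfl⟩ : π a ∈ A)).antisymm
      fun b hb => ?_
    have hπ' : ∀ s ∈ S, π.symm s = s := fun s hs => π.symm_apply_eq.2 (hπ s hs).symm
    exact ⟨π.symm b, h b hb ⟨π.symm, hπ', rfl⟩, π.apply_symm_apply b⟩

theorem exists_mem_intervalsAndPoints_subset_qOrbit (T : Finset ℚ) (a : ℚ) :
    ∃ B ∈ intervalsAndPoints T, a ∈ B ∧ B ⊆ qOrbit T a := by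
  by_cases haT : a ∈ T
  · refine ⟨{a}, Finset.mem_union_right _ (Finset.mem_image_of_mem _ haT), rfl, ?_⟩
    rintro _ rfl
    exact ⟨OrderIso.refl ℚ, fun _ _ => rfl, rfl⟩
  · obtain ⟨B, hB, haB, hBT⟩ := exists_mem_intervalsAndPoints_of_notMem haT
    exact ⟨B, hB, haB, fun x hx => exists_orderIso_fixing_of_forall_notMem_uIcc T (hBT x hx)⟩

/-- A subset `A ⊆ ℚ` is fixed setwise by every order-automorphism of `ℚ` fixing a
finite set `S` pointwise iff `A` is a union of `S`-orbits. Consequently, every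
finitely supported subset of `ℚ` is a finite union of open intervals
(possibly unbounded) and single points. -/
theorem finitelySupported_subsets_of_Q (S : Finset ℚ) :
    (∀ A : Set ℚ,
      (∀ π : ℚ ≃o ℚ, (∀ s ∈ S, π s = s) → ⇑π '' A = A) ↔
      (∀ a ∈ A, qOrbit S a ⊆ A)) ∧
    (∀ A : Set ℚ,
      (∃ T : Finset ℚ, ∀ π : ℚ ≃o ℚ, (∀ s ∈ T, π s = s) → ⇑π '' A = A) →
      ∃ F : Finset (Set ℚ),
        (∀ B ∈ F, (∃ a b : ℚ, B = Set.Ioo a b) ∨ (∃ a : ℚ, B = Set.Ioi a) ∨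
          (∃ a : ℚ, B = Set.Iio a) ∨ B = Set.univ ∨ (∃ a : ℚ, B = {a})) ∧
        A = ⋃₀ ↑F) := by
  classical
  refine ⟨forall_image_eq_iff_forall_qOrbit_subset S, ?_⟩
  rintro A ⟨T, hT⟩
  have hA := (forall_image_eq_iff_forall_qOrbit_subset T A).1 hT
  refine ⟨(intervalsAndPoints T).filter (· ⊆ A),
    fun B hB => isIntervalOrPoint_of_mem_intervalsAndPoints (Finset.mem_filter.1 hB).1, ?_⟩
  refine Subset.antisymm (fun a ha => ?_)
    (sUnion_subset fun B hB => (Finset.mem_filter.1 hB).2)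
  obtain ⟨B, hB, haB, hBa⟩ := exists_mem_intervalsAndPoints_subset_qOrbit T a
  exact ⟨B, Finset.mem_filter.2 ⟨hB, hBa.trans (hA a ha)⟩, haB⟩
end

section
/- Over ordered atoms, every infinite finitely supported subset of ℚ contains an open interval; in particular, every infinite finitely supported subset of ℚ contains a strictly increasing infinite sequence. -/
/-!
If `A` is supported by the finite set `S`, every order automorphism of `ℚ` fixing `S` pointwise
preserves `A`. Since `A` is infinite it has a point `a ∉ S`, and `a` lies in an open interval
`(c, d)` avoiding `S`. Piecewise linear automorphisms that are the identity outside `(c, d)` move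
`a` to any point of `(c, d)`, so `(c, d) ⊆ A`.
-/

open Set

def scaleAbove {R : Type*} [CommRing R] [LinearOrder R] (p s z : R) : R :=
  if z ≤ p then z else p + s * (z - p)

section Ring

variable {R : Type*} [CommRing R] [LinearOrder R] {p s z : R}

lemma scaleAbove_of_le (h : z ≤ p) : scaleAbove p s z = z := if_pos h

lemma scaleAbove_of_ge (h : p ≤ z) : scaleAbove p s z = p + s * (z - p) := by
  rcases h.eq_or_lt with rfl | h
  · rw [scaleAbove_of_le le_rfl, sub_self, mul_zero, add_zero]
  · exact if_neg h.not_ge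

lemma scaleAbove_strictMono [IsStrictOrderedRing R] (hs : 0 < s) :
    StrictMono (scaleAbove p s) := by
  intro z w hzw
  rcases le_total w p with hw | hw
  · rwa [scaleAbove_of_le hw, scaleAbove_of_le (hzw.le.trans hw)]
  rw [scaleAbove_of_ge hw]
  rcases lt_or_ge z p with hz | hz
  · rw [scaleAbove_of_le hz.le]
    linarith [mul_nonneg hs.le (sub_nonneg.2 hw)]
  · rw [scaleAbove_of_ge hz]
    linarith [mul_lt_mul_of_pos_left (sub_lt_sub_right hzw p) hs]

end Ring

section Field

variable {𝕜 : Type*} [Field 𝕜] [LinearOrder 𝕜] [IsStrictOrderedRing 𝕜]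

lemma scaleAbove_inv_scaleAbove {p s : 𝕜} (hs : 0 < s) (z : 𝕜) :
    scaleAbove p s⁻¹ (scaleAbove p s z) = z := by
  rcases le_total z p with hz | hz
  · rw [scaleAbove_of_le hz, scaleAbove_of_le hz]
  · have hpz : p ≤ scaleAbove p s z := by
      rw [scaleAbove_of_ge hz]
      linarith [mul_nonneg hs.le (sub_nonneg.2 hz)]
    rw [scaleAbove_of_ge hpz, scaleAbove_of_ge hz, add_sub_cancel_left,
      inv_mul_cancel_left₀ hs.ne', add_sub_cancel]

def scaleAboveOrderIso (p : 𝕜) {s : 𝕜} (hs : 0 < s) : 𝕜 ≃o 𝕜 :=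
  (scaleAbove_strictMono hs).orderIsoOfRightInverse _ (scaleAbove p s⁻¹) fun z => by
    simpa using scaleAbove_inv_scaleAbove (inv_pos.2 hs) z

lemma scaleAboveOrderIso_apply (p : 𝕜) {s : 𝕜} (hs : 0 < s) (z : 𝕜) :
    scaleAboveOrderIso p hs z = scaleAbove p s z := rfl

/-- `π` has slope `(y - c) / (x - c)` on `[c, x]` and `(d - y) / (d - x)` on `[x, d]`; it is
obtained by bending the identity at `c`, then at `y`, then back at `d`. -/
lemma exists_orderIso_apply_eq_of_mem_Ioo {c d x y : 𝕜} (hx : x ∈ Ioo c d) (hy : y ∈ Ioo c d) :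
    ∃ π : 𝕜 ≃o 𝕜, π x = y ∧ ∀ z ∉ Ioo c d, π z = z := by
  obtain ⟨hcx, hxd⟩ := hx
  obtain ⟨hcy, hyd⟩ := hy
  set s₁ := (y - c) / (x - c)
  set s₂ := (d - y) / (d - x)
  have hs₁ : 0 < s₁ := div_pos (sub_pos.2 hcy) (sub_pos.2 hcx)
  have hs₂ : 0 < s₂ := div_pos (sub_pos.2 hyd) (sub_pos.2 hxd)
  have hs₁x : s₁ * (x - c) = y - c := div_mul_cancel₀ _ (sub_pos.2 hcx).ne'
  have hs₂x : s₂ * (d - x) = d - y := div_mul_cancel₀ _ (sub_pos.2 hxd).ne'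
  have hr : s₂ / s₁ * s₁ = s₂ := div_mul_cancel₀ _ hs₁.ne'
  refine ⟨(scaleAboveOrderIso c hs₁).trans
    ((scaleAboveOrderIso y (div_pos hs₂ hs₁)).trans (scaleAboveOrderIso d (inv_pos.2 hs₂))),
    ?_, fun z hz => ?_⟩
  · simp only [OrderIso.trans_apply, scaleAboveOrderIso_apply]
    rw [scaleAbove_of_ge hcx.le, hs₁x, add_sub_cancel, scaleAbove_of_le le_rfl,
      scaleAbove_of_le hyd.le]
  simp only [OrderIso.trans_apply, scaleAboveOrderIso_apply]
  rcases not_and_or.1 hz with hz | hz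
  · rw [not_lt] at hz
    rw [scaleAbove_of_le hz, scaleAbove_of_le (hz.trans hcy.le),
      scaleAbove_of_le (hz.trans (hcx.trans hxd).le)]
  · rw [not_lt] at hz
    have hw : scaleAbove c s₁ z = y + s₁ * (z - x) := by
      rw [scaleAbove_of_ge ((hcx.trans hxd).le.trans hz)]
      linear_combination hs₁x
    have hyw : y ≤ y + s₁ * (z - x) := by
      linarith [mul_nonneg hs₁.le (sub_nonneg.2 (hxd.le.trans hz))]
    have hv : scaleAbove y (s₂ / s₁) (y + s₁ * (z - x)) = d + s₂ * (z - d) := by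
      rw [scaleAbove_of_ge hyw]
      linear_combination (z - x) * hr + hs₂x
    have hdv : d ≤ d + s₂ * (z - d) := by
      linarith [mul_nonneg hs₂.le (sub_nonneg.2 hz)]
    rw [hw, hv, scaleAbove_of_ge hdv, add_sub_cancel_left, inv_mul_cancel_left₀ hs₂.ne',
      add_sub_cancel]

lemma Ioo_subset_of_orderIso_image_subset {A S : Set 𝕜}
    (hA : ∀ π : 𝕜 ≃o 𝕜, (∀ s ∈ S, π s = s) → π '' A ⊆ A) {a c d : 𝕜} (ha : a ∈ A)
    (hacd : a ∈ Ioo c d) (hS : Disjoint (Ioo c d) S) : Ioo c d ⊆ A := by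
  intro y hy
  obtain ⟨π, hπa, hπ⟩ := exists_orderIso_apply_eq_of_mem_Ioo hacd hy
  exact hA π (fun s hs => hπ s (hS.notMem_of_mem_right hs)) ⟨a, ha, hπa⟩

end Field

lemma Set.Finite.exists_Ioo_mem_disjoint {α : Type*} [LinearOrder α] [TopologicalSpace α]
    [OrderTopology α] [NoMaxOrder α] [NoMinOrder α] {S : Set α} (hS : S.Finite) {a : α}
    (ha : a ∉ S) : ∃ c d, a ∈ Ioo c d ∧ Disjoint (Ioo c d) S := by
  obtain ⟨c, d, hacd, hcd⟩ :=
    mem_nhds_iff_exists_Ioo_subset.1 (hS.isClosed.isOpen_compl.mem_nhds ha)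
  exact ⟨c, d, hacd, subset_compl_iff_disjoint_right.1 hcd⟩

/-- Over ordered atoms, every infinite finitely supported subset of `ℚ` contains an
open interval; in particular it contains a strictly increasing infinite sequence. -/
theorem infinite_finitelySupported_contains_interval (A : Set ℚ) (hA : A.Infinite)
    (hsupp : ∃ S : Finset ℚ, ∀ π : ℚ ≃o ℚ, (∀ s ∈ S, π s = s) → ⇑π '' A = A) :
    (∃ a b : ℚ, a < b ∧ Set.Ioo a b ⊆ A) ∧
    (∃ f : ℕ → ℚ, StrictMono f ∧ ∀ n, f n ∈ A) := by
  obtain ⟨S, hS⟩ := hsupp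
  obtain ⟨a, haA, haS⟩ := (hA.sdiff S.finite_toSet).nonempty
  obtain ⟨c, d, hacd, hdisj⟩ := S.finite_toSet.exists_Ioo_mem_disjoint haS
  have hcd : c < d := hacd.1.trans hacd.2
  have hIoo : Ioo c d ⊆ A :=
    Ioo_subset_of_orderIso_image_subset (fun π hπ => (hS π hπ).subset) haA hacd hdisj
  obtain ⟨f, hf, hfcd, -⟩ := exists_seq_strictMono_tendsto' hcd
  exact ⟨⟨c, d, hcd, hIoo⟩, f, hf, fun n => hIoo (hfcd n)⟩
end

section
/- Consider a Kripke-style structure whose states are finite sequences of atoms with no repeated letters (over a countably infinite set 𝔸), with transitions w → wa for each atom a not occurring in w, and where the unique basic predicate holding at a nonempty word is its last letter. Then: (1) every state has at least one successor, and at every successor some basic predicate holds; and (2) on every path, no basic predicate holds more than once. -/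
/-! An infinite alphabet always leaves a fresh atom, and a path only ever appends letters, so the
letter appended at step `j` cannot have been the last letter of any earlier state. -/

/-- Transition relation of the model whose states are duplicate-free words over the
atoms: `w → w ++ [a]` for any atom `a` not occurring in `w`. -/
def freshStep {A : Type*} (w w' : List A) : Prop :=
  w.Nodup ∧ ∃ a : A, a ∉ w ∧ w' = w ++ [a]

namespace freshStep

variable {A : Type*} {w w' : List A}

theorem exists_of_nodup [Infinite A] (hw : w.Nodup) : ∃ a : A, freshStep w (w ++ [a]) := by
  classical
  obtain ⟨a, ha⟩ := w.toFinset.exists_notMem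
  exact ⟨a, hw, a, by simpa using ha, rfl⟩

theorem subset (h : freshStep w w') : w ⊆ w' := by
  obtain ⟨-, a, -, rfl⟩ := h
  exact List.subset_append_left w [a]

theorem notMem_of_getLast?_eq_some (h : freshStep w w') {p : A} (hp : w'.getLast? = some p) :
    p ∉ w := by
  obtain ⟨-, a, ha, rfl⟩ := h
  rw [List.getLast?_concat, Option.some_inj] at hp
  exact hp ▸ ha

end freshStep

theorem subset_of_freshStep_path {A : Type*} {n : ℕ} {ρ : ℕ → List A}
    (hρ : ∀ i < n, freshStep (ρ i) (ρ (i + 1))) {i j : ℕ} (hij : i ≤ j) (hjn : j ≤ n) :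
    ρ i ⊆ ρ j := by
  induction j, hij using Nat.le_induction with
  | base => exact List.Subset.refl _
  | succ k _ ih => exact List.Subset.trans (ih (by omega)) (hρ k (by omega)).subset

theorem freshWord_model_properties_general {A : Type*} [Infinite A] :
    (∀ w : List A, w.Nodup →
      ∃ w' : List A, freshStep w w' ∧ ∃ p : A, w'.getLast? = some p) ∧
    (∀ (n : ℕ) (ρ : ℕ → List A), (∀ i < n, freshStep (ρ i) (ρ (i + 1))) →
      ∀ i j : ℕ, i < j → j ≤ n → ∀ p : A,
        (ρ i).getLast? = some p → (ρ j).getLast? = some p → False) := by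
  refine ⟨fun w hw => ?_, fun n ρ hρ i j hij hjn p hpi hpj => ?_⟩
  · obtain ⟨a, ha⟩ := freshStep.exists_of_nodup hw
    exact ⟨w ++ [a], ha, a, List.getLast?_concat⟩
  · obtain ⟨k, rfl⟩ : ∃ k, j = k + 1 := Nat.exists_eq_add_one_of_ne_zero (by omega)
    have hp_mem : p ∈ ρ k :=
      subset_of_freshStep_path hρ (Nat.le_of_lt_succ hij) (by omega) (List.mem_of_getLast? hpi)
    exact (hρ k (by omega)).notMem_of_getLast?_eq_some hpj hp_mem

/-- In the Kripke model of duplicate-free words over a countably infinite alphabet,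
with transitions `w → wa` for fresh `a` and the last letter as the unique basic
predicate of a nonempty word: (1) every state has a successor at which some basic
predicate holds, and (2) on every path no basic predicate holds more than once. -/
theorem freshWord_model_properties {A : Type*} [Countable A] [Infinite A] :
    (∀ w : List A, w.Nodup →
      ∃ w' : List A, freshStep w w' ∧ ∃ p : A, w'.getLast? = some p) ∧
    (∀ (n : ℕ) (ρ : ℕ → List A), (∀ i < n, freshStep (ρ i) (ρ (i + 1))) →
      ∀ i j : ℕ, i < j → j ≤ n → ∀ p : A,
        (ρ i).getLast? = some p → (ρ j).getLast? = some p → False) :=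
  freshWord_model_properties_general
end

section
/- Define a translation M from LTL formulas in negation normal form to modal μ-calculus formulas by: M(p) = p, M(¬p) = ¬p, M(Xφ) = □M(φ), M(φ∨ψ) = M(φ)∨M(ψ), M(φ∧ψ) = M(φ)∧M(ψ), M(φ U ψ) = μY.(M(ψ) ∨ (M(φ) ∧ □Y)), M(φ R ψ) = νY.(M(ψ) ∧ (M(φ) ∨ □Y)). Then in every Kripke model, if a state x satisfies M(φ), then every infinite path starting from x, viewed as a word model, satisfies the LTL formula φ. -/
/-- LTL formulas in negation normal form over basic predicates `P`. -/
inductive LTLF (P : Type*) : Type _ where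
  | pos (p : P)
  | neg (p : P)
  | next (φ : LTLF P)
  | disj (φ ψ : LTLF P)
  | conj (φ ψ : LTLF P)
  | untl (φ ψ : LTLF P)
  | rels (φ ψ : LTLF P)

/-- Least fixpoint of a set operator (Knaster–Tarski). -/
def lfpSet {S : Type*} (f : Set S → Set S) : Set S := sInf {X | f X ⊆ X}

/-- Greatest fixpoint of a set operator (Knaster–Tarski). -/
def gfpSet {S : Type*} (f : Set S → Set S) : Set S := sSup {X | X ⊆ f X}

/-- The μ-calculus semantics of the translation `M(φ)` of an LTL formula `φ`, over a
Kripke model with states `S`, transition relation `r` and valuation `val`: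
`M(p) = p`, `M(¬p) = ¬p`, `M(Xφ) = □M(φ)`, `M` commutes with `∨` and `∧`,
`M(φ U ψ) = μY.(M(ψ) ∨ (M(φ) ∧ □Y))`, `M(φ R ψ) = νY.(M(ψ) ∧ (M(φ) ∨ □Y))`. -/
def muSem {P S : Type*} (val : S → P → Prop) (r : S → S → Prop) : LTLF P → Set S
  | .pos p => {x | val x p}
  | .neg p => {x | ¬ val x p}
  | .next φ => {x | ∀ y, r x y → y ∈ muSem val r φ}
  | .disj φ ψ => muSem val r φ ∪ muSem val r ψ
  | .conj φ ψ => muSem val r φ ∩ muSem val r ψ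
  | .untl φ ψ =>
      lfpSet (fun Y => muSem val r ψ ∪ (muSem val r φ ∩ {x | ∀ y, r x y → y ∈ Y}))
  | .rels φ ψ =>
      gfpSet (fun Y => muSem val r ψ ∩ (muSem val r φ ∪ {x | ∀ y, r x y → y ∈ Y}))

/-- The standard LTL semantics of a formula on an infinite path `π : ℕ → S`. -/
def pathSat {P S : Type*} (val : S → P → Prop) (π : ℕ → S) : LTLF P → Prop
  | .pos p => val (π 0) p
  | .neg p => ¬ val (π 0) p
  | .next φ => pathSat val (fun n => π (n + 1)) φ
  | .disj φ ψ => pathSat val π φ ∨ pathSat val π ψ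
  | .conj φ ψ => pathSat val π φ ∧ pathSat val π ψ
  | .untl φ ψ => ∃ j : ℕ, pathSat val (fun n => π (j + n)) ψ ∧
      ∀ i < j, pathSat val (fun n => π (i + n)) φ
  | .rels φ ψ => ∀ j : ℕ, pathSat val (fun n => π (j + n)) ψ ∨
      ∃ i < j, pathSat val (fun n => π (i + n)) φ

/-!
By induction on `φ`, `M(φ)` is contained in the set of states all of whose paths satisfy `φ`.
For `φ U ψ` that set is a prefixed point of `Y ↦ M(ψ) ∪ (M(φ) ∩ □Y)`, because `φ U ψ` unfolds
to `ψ ∨ (φ ∧ X(φ U ψ))` on paths; hence it contains the least fixpoint. For `φ R ψ`, a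
postfixed point `Y ∋ x` of `Y ↦ M(ψ) ∩ (M(φ) ∪ □Y)` is an invariant along any path from `x`:
the path stays in `Y`, where `ψ` holds, until `φ` has held once.
-/

theorem lfpSet_subset_of_prefixed {S : Type*} {f : Set S → Set S} {X : Set S}
    (h : f X ⊆ X) : lfpSet f ⊆ X :=
  sInf_le h

theorem mem_gfpSet {S : Type*} {f : Set S → Set S} {x : S} :
    x ∈ gfpSet f ↔ ∃ Y, Y ⊆ f Y ∧ x ∈ Y :=
  Set.mem_sUnion

namespace LTLF

variable {P S : Type*} (val : S → P → Prop) {π : ℕ → S} {φ ψ : LTLF P}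

theorem pathSat_untl_of_right (h : pathSat val π ψ) : pathSat val π (untl φ ψ) :=
  ⟨0, by simpa using h, fun i hi => absurd hi i.not_lt_zero⟩

theorem pathSat_untl_of_left_of_next (hφ : pathSat val π φ)
    (h : pathSat val π (next (untl φ ψ))) : pathSat val π (untl φ ψ) := by
  obtain ⟨j, hψ, hφ'⟩ := h
  refine ⟨j + 1, by simpa [Nat.add_right_comm] using hψ, fun i hi => ?_⟩
  cases i with
  | zero => simpa using hφ
  | succ i => simpa [Nat.add_right_comm] using hφ' i (by omega)

theorem pathSat_rels_of_invariant (Q : ℕ → Prop) (h0 : Q 0)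
    (hstep : ∀ n, Q n → pathSat val (fun m => π (n + m)) ψ ∧
      (pathSat val (fun m => π (n + m)) φ ∨ Q (n + 1))) :
    pathSat val π (rels φ ψ) := by
  have released_or_inv : ∀ j, (∃ i < j, pathSat val (fun m => π (i + m)) φ) ∨ Q j := by
    intro j
    induction j with
    | zero => exact Or.inr h0
    | succ j ih =>
      rcases ih with ⟨i, hi, hφ⟩ | hQ
      · exact Or.inl ⟨i, by omega, hφ⟩
      · rcases (hstep j hQ).2 with hφ | hQ'
        · exact Or.inl ⟨j, j.lt_succ_self, hφ⟩
        · exact Or.inr hQ'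
  intro j
  rcases released_or_inv j with hrel | hQ
  · exact Or.inr hrel
  · exact Or.inl (hstep j hQ).1

end LTLF

section Kripke

variable {P S : Type*} (val : S → P → Prop) (r : S → S → Prop)

def IsPath (π : ℕ → S) : Prop := ∀ n, r (π n) (π (n + 1))

variable {r}

theorem IsPath.shift {π : ℕ → S} (hπ : IsPath r π) (j : ℕ) : IsPath r (fun n => π (j + n)) :=
  fun n => hπ (j + n)

theorem IsPath.tail {π : ℕ → S} (hπ : IsPath r π) : IsPath r (fun n => π (n + 1)) :=
  fun n => hπ (n + 1)

variable (r)

def allPathsSat (φ : LTLF P) : Set S :=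
  {x | ∀ π : ℕ → S, π 0 = x → IsPath r π → pathSat val π φ}

variable {val r}

theorem IsPath.pathSat_shift {π : ℕ → S} {φ : LTLF P} (hπ : IsPath r π) {n : ℕ}
    (h : π n ∈ allPathsSat val r φ) : pathSat val (fun m => π (n + m)) φ :=
  h _ rfl (hπ.shift n)

variable (val r)

theorem muSem_subset_allPathsSat (φ : LTLF P) : muSem val r φ ⊆ allPathsSat val r φ := by
  induction φ with
  | pos p => rintro x hx π rfl -; exact hx
  | neg p => rintro x hx π rfl -; exact hx
  | next φ ih => rintro x hx π rfl hπ; exact ih (hx _ (hπ 0)) _ rfl hπ.tail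
  | disj φ ψ ihφ ihψ =>
    rintro x (hx | hx) π rfl hπ
    · exact Or.inl (ihφ hx π rfl hπ)
    · exact Or.inr (ihψ hx π rfl hπ)
  | conj φ ψ ihφ ihψ => rintro x ⟨hφ, hψ⟩ π rfl hπ; exact ⟨ihφ hφ π rfl hπ, ihψ hψ π rfl hπ⟩
  | untl φ ψ ihφ ihψ =>
    refine lfpSet_subset_of_prefixed ?_
    rintro x (hψ | ⟨hφ, hnext⟩) π rfl hπ
    · exact LTLF.pathSat_untl_of_right val (ihψ hψ π rfl hπ)
    · exact LTLF.pathSat_untl_of_left_of_next val (ihφ hφ π rfl hπ)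
        (hnext _ (hπ 0) _ rfl hπ.tail)
  | rels φ ψ ihφ ihψ =>
    rintro x hx π rfl hπ
    obtain ⟨Y, hY, hxY⟩ := mem_gfpSet.1 hx
    refine LTLF.pathSat_rels_of_invariant val (fun n => π n ∈ Y) hxY fun n hn => ?_
    obtain ⟨hψ, hφ_or_next⟩ := hY hn
    exact ⟨hπ.pathSat_shift (ihψ hψ),
      hφ_or_next.imp (fun hφ => hπ.pathSat_shift (ihφ hφ)) (fun hnext => hnext _ (hπ n))⟩

end Kripke

/-- If a state `x` of a Kripke model satisfies the μ-calculus translation `M(φ)` of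
an LTL formula `φ` in negation normal form, then every infinite path of the model
starting from `x` satisfies `φ`. -/
theorem muSem_sound_for_paths {P S : Type*} (val : S → P → Prop) (r : S → S → Prop)
    (φ : LTLF P) (x : S) (hx : x ∈ muSem val r φ)
    (π : ℕ → S) (h0 : π 0 = x) (hπ : ∀ n : ℕ, r (π n) (π (n + 1))) :
    pathSat val π φ :=
  muSem_subset_allPathsSat val r φ hx π h0 hπ
end
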